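/- Let u ∈ ℝ³ be a unit vector, R : ℝ → ℝ^{3×3}, θ : ℝ → ℝ, t₀ ∈ ℝ, ω ∈ ℝ³ and v ∈ ℝ. Suppose R has derivative R(t₀)·ω^× at t₀ and θ has derivative v at t₀. Then the map t ↦ R(t)·Ra(θ(t),u) has derivative R(t₀)·Ra(θ(t₀),u)·(Ra(θ(t₀),u)ᵀ ω + v·u)^× at t₀. -/

import Mathlib

open Matrix

noncomputable section

abbrev M3 : Type := Matrix (Fin 3) (Fin 3) ℝ
abbrev V3 : Type := Fin 3 → ℝ

/-- skew-symmetric matrix associated to `x`: `skew x *ᵥ y = x ×₃ y`. -/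
def skew (x : V3) : M3 :=
  !![0, -x 2, x 1; x 2, 0, -x 0; -x 1, x 0, 0]

/-- the special orthogonal group SO(3) as a subset of 3×3 matrices -/
def SO3 : Set M3 := {R | Rᵀ * R = 1 ∧ R.det = 1}

/-- Rodrigues formula -/
def Ra (θ : ℝ) (u : V3) : M3 :=
  1 + Real.sin θ • skew u + (1 - Real.cos θ) • (skew u * skew u)

/-- `psi M = vec (P_a M)`, the vector part of the antisymmetric projection -/
def psi (M : M3) : V3 :=
  ![(M 2 1 - M 1 2) / 2, (M 0 2 - M 2 0) / 2, (M 1 0 - M 0 1) / 2]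

/-- the angular-warping transformation `T(R,θ) = R · Ra(θ,u)` -/
def Tmap (u : V3) (R : M3) (θ : ℝ) : M3 := R * Ra θ u

/-- the potential function `U(R,θ)` on SO(3) × ℝ -/
def Ufun (A : M3) (u : V3) (γ : ℝ) (R : M3) (θ : ℝ) : ℝ :=
  (A * (1 - Tmap u R θ)).trace + γ / 2 * θ ^ 2

/-- Euclidean norm on ℝ³ -/
def enorm3 (x : V3) : ℝ := Real.sqrt (x ⬝ᵥ x)

/-- Frobenius norm of a 3×3 matrix -/
def fnorm (M : M3) : ℝ := Real.sqrt ((Mᵀ * M).trace)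

/-- `E(M) := (tr(M) I − Mᵀ)/2` -/
def Emap (M : M3) : M3 := (2⁻¹ : ℝ) • (M.trace • (1 : M3) - Mᵀ)

/-- `D_R(R,θ)` from Lemma 2 -/
def DR (A : M3) (u : V3) (R : M3) (θ : ℝ) : M3 :=
  Ra θ u * Emap (A * Tmap u R θ) * (Ra θ u)ᵀ

/-- `D_θ(R,θ)` from Lemma 2 -/
def Dθ (A : M3) (u : V3) (R : M3) (θ : ℝ) : V3 :=
  (Ra θ u * Emap (A * Tmap u R θ)) *ᵥ u - skew (Ra θ u *ᵥ psi (A * Tmap u R θ)) *ᵥ u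

/-- Δ(v,u) from the construction of the synergistic gap -/
def Delta (A : M3) (v u : V3) : ℝ :=
  u ⬝ᵥ ((A.trace • (1 : M3) - A - (2 * (v ⬝ᵥ A *ᵥ v)) • ((1 : M3) - vecMulVec v v)) *ᵥ u)

/-- `v` is a unit eigenvector of `A` -/
def IsUnitEigen (A : M3) (v : V3) : Prop :=
  v ⬝ᵥ v = 1 ∧ ∃ lam : ℝ, A *ᵥ v = lam • v

/-- Ā := (tr(A) I − A)/2 -/
def Abar (A : M3) : M3 := (2⁻¹ : ℝ) • (A.trace • (1 : M3) - A)

/-- `lam` is an eigenvalue of `M` -/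
def IsEigen (M : M3) (lam : ℝ) : Prop := ∃ w : V3, w ≠ 0 ∧ M *ᵥ w = lam • w
attribute [local instance] Matrix.normedAddCommGroup Matrix.normedSpace

/-!
The derivative of a product is `R' · Ra + R · (Ra ∘ θ)'`. For a unit axis `(u^×)³ = -u^×`, so
the Rodrigues matrices form a one-parameter group `Ra(a) Ra(b) = Ra(a + b)` generated by `u^×`:
hence `(Ra ∘ θ)' = v · Ra · u^×` and `Ra ∈ SO(3)`. The term `R ω^× Ra` is then rewritten as
`R Ra (Raᵀ ω)^×` by the conjugation rule `ω^× Q = Q (Qᵀ ω)^×` for `Q ∈ SO(3)`, which follows from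
the polynomial identity `Mᵀ (M x)^× M = det M · x^×`.
-/

theorem HasDerivAt.matrix_mul {𝕜 : Type*} [NontriviallyNormedField 𝕜] [CompleteSpace 𝕜]
    {l m n : Type*} [Fintype l] [Fintype m] [Fintype n]
    {f : 𝕜 → Matrix l m 𝕜} {g : 𝕜 → Matrix m n 𝕜} {f' : Matrix l m 𝕜} {g' : Matrix m n 𝕜}
    {t : 𝕜} (hf : HasDerivAt f f' t) (hg : HasDerivAt g g' t) :
    HasDerivAt (fun s => f s * g s) (f' * g t + f t * g') t := by
  rw [add_comm]
  exact (mulLinearMap 𝕜).toContinuousBilinearMap.hasDerivAt_of_bilinear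
    (fun _ => hf) (fun _ => hg)

lemma skew_add (x y : V3) : skew (x + y) = skew x + skew y := by
  ext i j
  fin_cases i <;> fin_cases j <;> simp [skew] <;> ring

lemma skew_smul (c : ℝ) (x : V3) : skew (c • x) = c • skew x := by
  ext i j
  fin_cases i <;> fin_cases j <;> simp [skew]

lemma transpose_skew (x : V3) : (skew x)ᵀ = -skew x := by
  ext i j
  fin_cases i <;> fin_cases j <;> simp [skew]

lemma skew_mul_skew_mul_skew (x : V3) : skew x * skew x * skew x = -(x ⬝ᵥ x) • skew x := by
  ext i j
  fin_cases i <;> fin_cases j <;>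
    simp [skew, Matrix.mul_apply, Fin.sum_univ_three, dotProduct] <;> ring

lemma transpose_mul_skew_mulVec_mul (M : M3) (x : V3) :
    Mᵀ * skew (M *ᵥ x) * M = M.det • skew x := by
  ext i j
  fin_cases i <;> fin_cases j <;>
    simp [skew, Matrix.mul_apply, Fin.sum_univ_three, Matrix.mulVec, dotProduct,
      Matrix.det_fin_three] <;> ring

lemma Ra_zero (u : V3) : Ra 0 u = 1 := by
  simp [Ra]

lemma transpose_Ra (θ : ℝ) (u : V3) : (Ra θ u)ᵀ = Ra (-θ) u := by
  simp only [Ra, transpose_add, transpose_smul, transpose_one, transpose_mul, transpose_skew,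
    Real.sin_neg, Real.cos_neg, neg_mul_neg, neg_smul, smul_neg]

section UnitAxis

variable {u : V3} (hu : u ⬝ᵥ u = 1)
include hu

lemma skew_mul_skew_mul_skew_of_unit : skew u * skew u * skew u = -skew u := by
  rw [skew_mul_skew_mul_skew, hu, neg_smul, one_smul]

lemma Ra_mul_skew (θ : ℝ) :
    Ra θ u * skew u = Real.cos θ • skew u + Real.sin θ • (skew u * skew u) := by
  have hK3 := skew_mul_skew_mul_skew_of_unit hu
  simp only [Ra, add_mul, one_mul, smul_mul_assoc, hK3]
  module

lemma Ra_mul_Ra (a b : ℝ) : Ra a u * Ra b u = Ra (a + b) u := by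
  have hK3 := skew_mul_skew_mul_skew_of_unit hu
  simp only [Ra, add_mul, mul_add, one_mul, mul_one, smul_mul_smul_comm, ← mul_assoc, hK3,
    neg_mul, Real.sin_add, Real.cos_add]
  module

lemma Ra_mem_SO3 (θ : ℝ) : Ra θ u ∈ SO3 := by
  have horth : ∀ φ, (Ra φ u)ᵀ * Ra φ u = 1 := fun φ => by
    rw [transpose_Ra, Ra_mul_Ra hu, neg_add_cancel, Ra_zero]
  refine ⟨horth θ, ?_⟩
  -- `det (Ra θ u)` is the square of `det (Ra (θ/2) u) = ±1`.
  have hsq : (Ra (θ / 2) u).det * (Ra (θ / 2) u).det = 1 := by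
    simpa only [det_mul, det_transpose, det_one] using congrArg det (horth (θ / 2))
  rw [← add_halves θ, ← Ra_mul_Ra hu, det_mul, hsq]

lemma hasDerivAt_Ra (θ : ℝ) : HasDerivAt (fun φ => Ra φ u) (Ra θ u * skew u) θ := by
  rw [Ra_mul_skew hu]
  have h := (((Real.hasDerivAt_sin θ).smul_const (skew u)).const_add 1).fun_add
    (((Real.hasDerivAt_cos θ).const_sub 1).smul_const (skew u * skew u))
  simp only [neg_neg] at h
  exact h

end UnitAxis

lemma skew_mul_of_mem_SO3 {Q : M3} (hQ : Q ∈ SO3) (ω : V3) :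
    skew ω * Q = Q * skew (Qᵀ *ᵥ ω) := by
  obtain ⟨horth, hdet⟩ := hQ
  have hQQt : Q * Qᵀ = 1 := mul_eq_one_comm.mp horth
  have hconj := transpose_mul_skew_mulVec_mul Q (Qᵀ *ᵥ ω)
  rw [mulVec_mulVec, hQQt, one_mulVec, hdet, one_smul] at hconj
  rw [← hconj, ← mul_assoc, ← mul_assoc, hQQt, one_mul]

theorem deriv_of_transformation_map
    (u : V3) (hu : u ⬝ᵥ u = 1) (R : ℝ → M3) (θ : ℝ → ℝ) (t₀ : ℝ) (ω : V3) (v : ℝ)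
    (hR : HasDerivAt R (R t₀ * skew ω) t₀) (hθ : HasDerivAt θ v t₀) :
    HasDerivAt (fun t => R t * Ra (θ t) u)
      (R t₀ * Ra (θ t₀) u * skew ((Ra (θ t₀) u)ᵀ *ᵥ ω + v • u)) t₀ := by
  have hRa : HasDerivAt (fun t => Ra (θ t) u) (v • (Ra (θ t₀) u * skew u)) t₀ :=
    (hasDerivAt_Ra hu (θ t₀)).scomp t₀ hθ
  convert hR.matrix_mul hRa using 1
  rw [skew_add, skew_smul, mul_add, mul_assoc, mul_assoc, mul_assoc,
    ← skew_mul_of_mem_SO3 (Ra_mem_SO3 hu (θ t₀)), mul_smul_comm]
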